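/- arXiv:1001.0521 — 5 statements merged into one kernel-verified Lean document; each statement's English description precedes it below -/
import Mathlib

section
/- Let G be a nonempty compact Hausdorff space equipped with a continuous associative multiplication satisfying both cancellation laws: s·t = s'·t implies s = s', and s·t = s·t' implies t = t', for all s, s', t, t' ∈ G. Then G is a topological group: there exists an identity element e ∈ G with e·g = g·e = g for all g, every g ∈ G has a two-sided inverse, and the inversion map g ↦ g⁻¹ is continuous. -/
/-!
By the Ellis–Numakura lemma the compact semigroup `G` has an idempotent `e`, and cancellation
makes it a two-sided identity and the only idempotent. For each `g`, the compact subsemigroup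
`g * G` has an idempotent too, which must be `e`; so `g` has a right inverse, which cancellation
makes two-sided. The graph `{(g, h) | g * h = e}` of inversion is closed, and a map into a
compact space with closed graph is continuous.
-/

open Set

theorem continuous_of_isClosed_graph {X Y : Type*} [TopologicalSpace X] [TopologicalSpace Y]
    [CompactSpace Y] {f : X → Y} (hf : IsClosed {p : X × Y | f p.1 = p.2}) : Continuous f := by
  refine continuous_iff_isClosed.mpr fun C hC => ?_
  have hpre : f ⁻¹' C = Prod.fst '' ({p : X × Y | f p.1 = p.2} ∩ univ ×ˢ C) := by
    ext x
    constructor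
    · exact fun hx => ⟨(x, f x), ⟨rfl, trivial, hx⟩, rfl⟩
    · rintro ⟨⟨x, y⟩, ⟨hxy : f x = y, -, hy⟩, rfl⟩
      rwa [mem_preimage, hxy]
  rw [hpre]
  exact isClosedMap_fst_of_compactSpace _ (hf.inter (isClosed_univ.prod hC))

theorem continuous_of_mul_eq {G : Type*} [Mul G] [IsLeftCancelMul G] [TopologicalSpace G]
    [ContinuousMul G] [CompactSpace G] [T1Space G] {e : G} {inv : G → G}
    (hinv : ∀ g, g * inv g = e) : Continuous inv := by
  have hgraph : {p : G × G | inv p.1 = p.2} = (fun p : G × G => p.1 * p.2) ⁻¹' {e} := by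
    ext ⟨g, h⟩
    change inv g = h ↔ g * h = e
    exact ⟨fun hh => hh ▸ hinv g, fun hh => mul_left_cancel (hh.trans (hinv g).symm).symm⟩
  exact continuous_of_isClosed_graph (hgraph ▸ isClosed_singleton.preimage continuous_mul)

namespace IsIdempotentElem

variable {G : Type*} [Semigroup G] {e : G}

theorem mul_eq_right [IsLeftCancelMul G] (he : IsIdempotentElem e) (g : G) : e * g = g :=
  mul_left_cancel (a := e) (by rw [← mul_assoc, he.eq])

theorem mul_eq_left [IsRightCancelMul G] (he : IsIdempotentElem e) (g : G) : g * e = g :=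
  mul_right_cancel (b := e) (by rw [mul_assoc, he.eq])

theorem eq_of_isCancelMul [IsCancelMul G] {f : G} (he : IsIdempotentElem e)
    (hf : IsIdempotentElem f) : f = e :=
  mul_left_cancel (a := f) (by rw [hf.eq, he.mul_eq_left])

theorem mul_eq_of_mul_eq [IsCancelMul G] (he : IsIdempotentElem e) {g h : G} (hgh : g * h = e) :
    h * g = e :=
  mul_right_cancel (b := h) (by rw [mul_assoc, hgh, he.mul_eq_left, he.mul_eq_right])

theorem exists_mul_eq [IsCancelMul G] [TopologicalSpace G] [SeparatelyContinuousMul G]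
    [CompactSpace G] [T2Space G] (he : IsIdempotentElem e) (g : G) : ∃ h, g * h = e := by
  have hmul : ∀ x ∈ range (g * ·), ∀ y ∈ range (g * ·), x * y ∈ range (g * ·) := by
    rintro _ ⟨x, rfl⟩ _ ⟨y, rfl⟩
    exact ⟨x * g * y, by simp only [mul_assoc]⟩
  obtain ⟨f, ⟨h, rfl⟩, hf⟩ := exists_idempotent_in_compact_subsemigroup
    (continuous_mul_const (M := G)) _ ⟨_, mem_range_self g⟩
    (isCompact_range (continuous_const_mul g)) hmul
  exact ⟨h, eq_of_isCancelMul he hf⟩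

end IsIdempotentElem

/-- A nonempty compact Hausdorff space with a continuous associative multiplication
satisfying both cancellation laws is a topological group: there is an identity element,
every element has a two-sided inverse, and the inversion map is continuous. -/
theorem stmt_4 {G : Type*} [TopologicalSpace G] [CompactSpace G] [T2Space G] [Nonempty G]
    (mul : G → G → G) (hcont : Continuous fun p : G × G => mul p.1 p.2)
    (hassoc : ∀ a b c : G, mul (mul a b) c = mul a (mul b c))
    (hlcancel : ∀ s s' t : G, mul s t = mul s' t → s = s')
    (hrcancel : ∀ s t t' : G, mul s t = mul s t' → t = t') :
    ∃ e : G, (∀ g : G, mul e g = g ∧ mul g e = g) ∧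
      ∃ inv : G → G, (∀ g : G, mul g (inv g) = e ∧ mul (inv g) g = e) ∧ Continuous inv := by
  let : Semigroup G := { mul := mul, mul_assoc := hassoc }
  have : IsCancelMul G :=
    { mul_left_cancel := fun s _ _ => hrcancel s _ _
      mul_right_cancel := fun t _ _ => hlcancel _ _ t }
  have : ContinuousMul G := ⟨hcont⟩
  obtain ⟨e, he⟩ : ∃ e : G, IsIdempotentElem e :=
    exists_idempotent_of_compact_t2_of_continuous_mul_left (continuous_mul_const (M := G))
  choose inv hinv using IsIdempotentElem.exists_mul_eq he
  refine ⟨e, fun g => ⟨he.mul_eq_right g, he.mul_eq_left g⟩, inv,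
    fun g => ⟨hinv g, he.mul_eq_of_mul_eq (hinv g)⟩, continuous_of_mul_eq hinv⟩
end

section
/- Let G be a compact Hausdorff space with a continuous associative multiplication (s,t) ↦ s·t. Then the linear span of the set of functions {(s,t) ↦ f(s·t)·g(t) : f, g ∈ C(G,ℂ)} is dense in C(G×G, ℂ) with the supremum norm if and only if the cancellation law (s·t = s'·t ⟹ s = s') holds for all s, s', t ∈ G. -/
/-!
By Stone–Weierstrass the span is dense once it is a unital star subalgebra separating points.
It is one, because `(f(st) g(t)) (f'(st) g'(t)) = (ff')(st) (gg')(t)` and the conjugate of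
`f(st) g(t)` is `f̄(st) ḡ(t)`; and it separates `(s, t) ≠ (s', t')` exactly when
`(st, t) ≠ (s't', t')`. So density follows from injectivity of `(s, t) ↦ (st, t)`, which is right
cancellation. Conversely, no function in the span, hence none in its closure, distinguishes two
points with the same image under this map, whereas continuous functions separate the points of
`G × G`.
-/

open Function Submodule

section

variable {𝕜 X Y Z : Type*} [RCLike 𝕜] [TopologicalSpace X] [TopologicalSpace Y]
  [TopologicalSpace Z]

lemma StarAlgebra.coe_adjoin_eq_span_of_star_subset {R A : Type*} [CommSemiring R] [StarRing R]
    [Semiring A] [StarRing A] [Algebra R A] [StarModule R A] (M : Submonoid A)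
    (hM : star (M : Set A) ⊆ M) :
    (StarAlgebra.adjoin R (M : Set A) : Set A) = span R (M : Set A) := by
  rw [← StarSubalgebra.coe_toSubalgebra, StarAlgebra.adjoin_toSubalgebra,
    Set.union_eq_self_of_subset_right hM, ← Subalgebra.coe_toSubmodule, Algebra.adjoin_eq_span,
    Submonoid.closure_eq]

lemma exists_continuousMap_apply_ne [T35Space X] {x y : X} (hxy : x ≠ y) :
    ∃ f : C(X, 𝕜), f x ≠ f y := by
  obtain ⟨f, hf, hfxy⟩ := separatesPoints_continuous_of_t35Space hxy
  exact ⟨⟨fun x => (f x : 𝕜), RCLike.continuous_ofReal.comp hf⟩, by simpa using hfxy⟩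

lemma Dense.exists_apply_ne [T35Space X] {D : Set C(X, 𝕜)} (hD : Dense D) {x y : X}
    (hxy : x ≠ y) : ∃ h ∈ D, h x ≠ h y := by
  by_contra! hDxy
  have hclosed : IsClosed {h : C(X, 𝕜) | h x = h y} :=
    isClosed_eq (continuous_eval_const x) (continuous_eval_const y)
  obtain ⟨f, hf⟩ := exists_continuousMap_apply_ne (𝕜 := 𝕜) hxy
  exact hf (hclosed.closure_subset_iff.mpr hDxy (by simp [hD.closure_eq]))

namespace ContinuousMap

variable (𝕜) in
def pullbackProducts (φ : C(X, Y)) (ψ : C(X, Z)) : Submonoid C(X, 𝕜) where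
  carrier := {h | ∃ (f : C(Y, 𝕜)) (g : C(Z, 𝕜)), h = f.comp φ * g.comp ψ}
  one_mem' := ⟨1, 1, by ext; simp⟩
  mul_mem' := by
    rintro _ _ ⟨f, g, rfl⟩ ⟨f', g', rfl⟩
    exact ⟨f * f', g * g', by ext; simp only [mul_apply, comp_apply]; ring⟩

variable {φ : C(X, Y)} {ψ : C(X, Z)}

lemma star_pullbackProducts_subset :
    star (pullbackProducts 𝕜 φ ψ : Set C(X, 𝕜)) ⊆ pullbackProducts 𝕜 φ ψ := by
  rintro h ⟨f, g, hfg⟩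
  exact ⟨star f, star g, by rw [← star_star h, hfg]; ext; simp⟩

lemma separatesPoints_pullbackProducts [T35Space Y] [T35Space Z]
    (hinj : Injective fun x => (φ x, ψ x)) :
    Set.SeparatesPoints ((⇑) '' (pullbackProducts 𝕜 φ ψ : Set C(X, 𝕜))) := by
  intro x x' hxx'
  rcases ne_or_eq (φ x) (φ x') with hφ | hφ
  · obtain ⟨f, hf⟩ := exists_continuousMap_apply_ne (𝕜 := 𝕜) hφ
    exact ⟨_, ⟨_, ⟨f, 1, rfl⟩, rfl⟩, by simpa using hf⟩
  · have hψ : ψ x ≠ ψ x' := fun hψ => hxx' (hinj (Prod.ext hφ hψ))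
    obtain ⟨g, hg⟩ := exists_continuousMap_apply_ne (𝕜 := 𝕜) hψ
    exact ⟨_, ⟨_, ⟨1, g, rfl⟩, rfl⟩, by simpa using hg⟩

lemma apply_eq_of_mem_span_pullbackProducts {x x' : X} (hφ : φ x = φ x') (hψ : ψ x = ψ x')
    {h : C(X, 𝕜)} (hh : h ∈ span 𝕜 (pullbackProducts 𝕜 φ ψ : Set C(X, 𝕜))) : h x = h x' := by
  refine LinearMap.eqOn_span (f := (evalCLM 𝕜 x : C(X, 𝕜) →L[𝕜] 𝕜).toLinearMap)
    (g := (evalCLM 𝕜 x' : C(X, 𝕜) →L[𝕜] 𝕜).toLinearMap) ?_ hh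
  rintro _ ⟨f, g, rfl⟩
  simp [hφ, hψ]

theorem dense_span_pullbackProducts_iff [CompactSpace X] [T35Space X] [T35Space Y] [T35Space Z] :
    Dense (span 𝕜 (pullbackProducts 𝕜 φ ψ : Set C(X, 𝕜)) : Set C(X, 𝕜)) ↔
      Injective fun x => (φ x, ψ x) := by
  constructor
  · intro hdense x x' hxx'
    by_contra hne
    obtain ⟨h, hh, hne'⟩ := hdense.exists_apply_ne hne
    exact hne' (apply_eq_of_mem_span_pullbackProducts (congrArg Prod.fst hxx')
      (congrArg Prod.snd hxx') hh)
  · intro hinj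
    have hsep : (StarAlgebra.adjoin 𝕜 (pullbackProducts 𝕜 φ ψ : Set C(X, 𝕜))).SeparatesPoints :=
      Set.separatesPoints_mono (Set.image_mono (StarAlgebra.subset_adjoin _ _))
        (separatesPoints_pullbackProducts hinj)
    rw [← StarAlgebra.coe_adjoin_eq_span_of_star_subset _ star_pullbackProducts_subset,
      dense_iff_closure_eq, ← StarSubalgebra.topologicalClosure_coe,
      starSubalgebra_topologicalClosure_eq_top_of_separatesPoints _ hsep, StarSubalgebra.coe_top]

end ContinuousMap

end

lemma injective_mul_snd_iff {G : Type*} (mul : G → G → G) :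
    Injective (fun p : G × G => (mul p.1 p.2, p.2)) ↔
      ∀ s s' t : G, mul s t = mul s' t → s = s' := by
  refine ⟨fun hinj s s' t hst => congrArg Prod.fst (@hinj (s, t) (s', t) (by simp [hst])), ?_⟩
  rintro hcancel ⟨s, t⟩ ⟨s', t'⟩ h
  obtain ⟨hst, rfl : t = t'⟩ := Prod.mk.inj h
  rw [hcancel s s' t hst]

theorem stmt_5_general {G : Type*} [TopologicalSpace G] [CompactSpace G] [T2Space G]
    (mul : G → G → G) (hcont : Continuous fun p : G × G => mul p.1 p.2) :
    Dense (Submodule.span ℂ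
        {h : C(G × G, ℂ) | ∃ f g : C(G, ℂ),
          h = (f.comp ⟨fun p : G × G => mul p.1 p.2, hcont⟩) *
              (g.comp ⟨Prod.snd, continuous_snd⟩)} : Set C(G × G, ℂ))
      ↔ ∀ s s' t : G, mul s t = mul s' t → s = s' :=
  (ContinuousMap.dense_span_pullbackProducts_iff (φ := ⟨_, hcont⟩)
    (ψ := ⟨Prod.snd, continuous_snd⟩)).trans (injective_mul_snd_iff mul)

/-- For a compact Hausdorff space `G` with a continuous associative multiplication, the
linear span of the functions `(s,t) ↦ f(s·t)·g(t)` (for `f, g ∈ C(G,ℂ)`) is dense in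
`C(G × G, ℂ)` (with the supremum norm) if and only if the cancellation law
`s·t = s'·t ⟹ s = s'` holds. -/
theorem stmt_5 {G : Type*} [TopologicalSpace G] [CompactSpace G] [T2Space G]
    (mul : G → G → G) (hcont : Continuous fun p : G × G => mul p.1 p.2)
    (hassoc : ∀ a b c : G, mul (mul a b) c = mul a (mul b c)) :
    Dense (Submodule.span ℂ
        {h : C(G × G, ℂ) | ∃ f g : C(G, ℂ),
          h = (f.comp ⟨fun p : G × G => mul p.1 p.2, hcont⟩) *
              (g.comp ⟨Prod.snd, continuous_snd⟩)} : Set C(G × G, ℂ))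
      ↔ ∀ s s' t : G, mul s t = mul s' t → s = s' :=
  stmt_5_general mul hcont
end

section
/- Let G be a compact Hausdorff space with a continuous associative multiplication (s,t) ↦ s·t. Then the linear span of the set of functions {(s,t) ↦ f(s)·g(s·t) : f, g ∈ C(G,ℂ)} is dense in C(G×G, ℂ) with the supremum norm if and only if the cancellation law (s·t = s·t' ⟹ t = t') holds for all s, t, t' ∈ G. -/
/-!
If `s·t = s·t'` with `t ≠ t'`, every generator `f(s)·g(s·t)` takes the same value at `(s, t)` and
`(s, t')`, hence so does every function in the closure of their span; but continuous functions
separate points. Conversely, the generators are closed under products and complex conjugation and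
contain `1`, so their span is a unital star subalgebra; under cancellation it separates points
(use `f(s)` when the first coordinates differ and `g(s·t)` otherwise), so it is dense by
Stone–Weierstrass.
-/

theorem ContinuousMap.exists_apply_ne {X 𝕜 : Type*} [TopologicalSpace X] [T35Space X] [RCLike 𝕜]
    {x y : X} (hxy : x ≠ y) : ∃ f : C(X, 𝕜), f x ≠ f y := by
  obtain ⟨f, hf, hfxy⟩ := separatesPoints_continuous_of_t35Space hxy
  exact ⟨⟨fun z => (f z : 𝕜), RCLike.continuous_ofReal.comp hf⟩, by simpa using hfxy⟩

theorem ContinuousMap.eq_of_dense_span {X 𝕜 : Type*} [TopologicalSpace X] [T35Space X] [RCLike 𝕜]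
    {S : Set C(X, 𝕜)} (hS : Dense (Submodule.span 𝕜 S : Set C(X, 𝕜))) {x y : X}
    (h : ∀ f ∈ S, f x = f y) : x = y := by
  have hxy : evalCLM 𝕜 x = evalCLM 𝕜 y := ContinuousLinearMap.ext_on hS h
  by_contra hne
  obtain ⟨f, hf⟩ := exists_apply_ne (𝕜 := 𝕜) hne
  exact hf (congrArg (· f) hxy)

theorem ContinuousMap.dense_span_of_separatesPoints {X 𝕜 : Type*} [TopologicalSpace X]
    [CompactSpace X] [RCLike 𝕜] (S : Submonoid C(X, 𝕜)) (star_mem : ∀ f ∈ S, star f ∈ S)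
    (separates : ∀ x y : X, x ≠ y → ∃ f ∈ S, f x ≠ f y) :
    Dense (Submodule.span 𝕜 (S : Set C(X, 𝕜)) : Set C(X, 𝕜)) := by
  set A := StarAlgebra.adjoin 𝕜 (S : Set C(X, 𝕜))
  have hA : (A : Set C(X, 𝕜)) = Submodule.span 𝕜 (S : Set C(X, 𝕜)) := by
    have hstar : (S : Set C(X, 𝕜)) ∪ star S = S :=
      Set.union_eq_left.mpr (Set.star_subset.mpr star_mem)
    rw [← StarSubalgebra.coe_toSubalgebra, StarAlgebra.adjoin_toSubalgebra, hstar,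
      ← Subalgebra.coe_toSubmodule, Algebra.adjoin_eq_span, Submonoid.closure_eq]
  have hsep : A.SeparatesPoints := fun x y hxy => by
    obtain ⟨f, hfS, hf⟩ := separates x y hxy
    exact ⟨f, ⟨f, StarAlgebra.subset_adjoin 𝕜 _ hfS, rfl⟩, hf⟩
  rw [← hA, dense_iff_closure_eq, ← StarSubalgebra.topologicalClosure_coe,
    starSubalgebra_topologicalClosure_eq_top_of_separatesPoints A hsep, StarSubalgebra.coe_top]

section LeftMulProducts

variable (𝕜 : Type*) [RCLike 𝕜] {G : Type*} [TopologicalSpace G] (mul : G → G → G)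
  (hcont : Continuous fun p : G × G => mul p.1 p.2)

def leftMulProducts : Submonoid C(G × G, 𝕜) where
  carrier := {h | ∃ f g : C(G, 𝕜), h = (f.comp ⟨Prod.fst, continuous_fst⟩) *
    (g.comp ⟨fun p : G × G => mul p.1 p.2, hcont⟩)}
  one_mem' := ⟨1, 1, by ext; simp⟩
  mul_mem' := by
    rintro _ _ ⟨f₁, g₁, rfl⟩ ⟨f₂, g₂, rfl⟩
    exact ⟨f₁ * f₂, g₁ * g₂, by ext; simp only [ContinuousMap.mul_apply,
      ContinuousMap.comp_apply, ContinuousMap.coe_mk]; ring⟩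

variable {𝕜 mul hcont}

theorem star_mem_leftMulProducts {h : C(G × G, 𝕜)} (hh : h ∈ leftMulProducts 𝕜 mul hcont) :
    star h ∈ leftMulProducts 𝕜 mul hcont := by
  obtain ⟨f, g, rfl⟩ := hh
  exact ⟨star f, star g, by ext; simp⟩

theorem apply_eq_of_mem_leftMulProducts {h : C(G × G, 𝕜)} (hh : h ∈ leftMulProducts 𝕜 mul hcont)
    {s t t' : G} (hst : mul s t = mul s t') : h (s, t) = h (s, t') := by
  obtain ⟨f, g, rfl⟩ := hh
  simp [hst]

theorem leftMulProducts_separatesPoints [T35Space G]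
    (hcancel : ∀ s t t' : G, mul s t = mul s t' → t = t') (p q : G × G) (hpq : p ≠ q) :
    ∃ h ∈ leftMulProducts 𝕜 mul hcont, h p ≠ h q := by
  obtain ⟨s, t⟩ := p
  obtain ⟨s', t'⟩ := q
  by_cases hs : s = s'
  · subst hs
    have hmul : mul s t ≠ mul s t' := fun h => hpq (by rw [hcancel s t t' h])
    obtain ⟨g, hg⟩ := ContinuousMap.exists_apply_ne (𝕜 := 𝕜) hmul
    exact ⟨_, ⟨1, g, rfl⟩, by simpa using hg⟩
  · obtain ⟨f, hf⟩ := ContinuousMap.exists_apply_ne (𝕜 := 𝕜) hs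
    exact ⟨_, ⟨f, 1, rfl⟩, by simpa using hf⟩

end LeftMulProducts

theorem stmt_6_general {G : Type*} [TopologicalSpace G] [CompactSpace G] [T2Space G]
    (mul : G → G → G) (hcont : Continuous fun p : G × G => mul p.1 p.2) :
    Dense (Submodule.span ℂ
        {h : C(G × G, ℂ) | ∃ f g : C(G, ℂ),
          h = (f.comp ⟨Prod.fst, continuous_fst⟩) *
              (g.comp ⟨fun p : G × G => mul p.1 p.2, hcont⟩)} : Set C(G × G, ℂ))
      ↔ ∀ s t t' : G, mul s t = mul s t' → t = t' := by
  change Dense (Submodule.span ℂ (leftMulProducts ℂ mul hcont : Set C(G × G, ℂ)) :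
    Set C(G × G, ℂ)) ↔ _
  refine ⟨fun hdense s t t' hst => ?_, fun hcancel => ?_⟩
  · exact congrArg Prod.snd <| ContinuousMap.eq_of_dense_span hdense
      fun _ hh => apply_eq_of_mem_leftMulProducts hh hst
  · exact ContinuousMap.dense_span_of_separatesPoints _ (fun _ => star_mem_leftMulProducts)
      (leftMulProducts_separatesPoints hcancel)

/-- For a compact Hausdorff space `G` with a continuous associative multiplication, the
linear span of the functions `(s,t) ↦ f(s)·g(s·t)` (for `f, g ∈ C(G,ℂ)`) is dense in
`C(G × G, ℂ)` (with the supremum norm) if and only if the cancellation law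
`s·t = s·t' ⟹ t = t'` holds. -/
theorem stmt_6 {G : Type*} [TopologicalSpace G] [CompactSpace G] [T2Space G]
    (mul : G → G → G) (hcont : Continuous fun p : G × G => mul p.1 p.2)
    (hassoc : ∀ a b c : G, mul (mul a b) c = mul a (mul b c)) :
    Dense (Submodule.span ℂ
        {h : C(G × G, ℂ) | ∃ f g : C(G, ℂ),
          h = (f.comp ⟨Prod.fst, continuous_fst⟩) *
              (g.comp ⟨fun p : G × G => mul p.1 p.2, hcont⟩)} : Set C(G × G, ℂ))
      ↔ ∀ s t t' : G, mul s t = mul s t' → t = t' :=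
  stmt_6_general mul hcont
end

section
/- Let H be an infinite-dimensional complex Hilbert space and 𝒦⁺ = Unitization ℂ 𝒦(H) the minimal unitization of the algebra of compact operators on H. Then every tracial state on 𝒦⁺ vanishes on the ideal of compact operators: if φ is a tracial state on 𝒦⁺, then φ(k) = 0 for every compact operator k ∈ 𝒦(H) ⊆ 𝒦⁺. -/
open Metric ContinuousLinearMap in
/-- The adjoint (star) of a compact operator on a complex Hilbert space is compact
(Schauder's theorem). -/
theorem isCompactOperator_star {H : Type*} [NormedAddCommGroup H] [InnerProductSpace ℂ H]
    [CompleteSpace H] {T : H →L[ℂ] H} (hT : IsCompactOperator ⇑T) :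
    IsCompactOperator ⇑(star T) := by
  classical
  set A : H →L[ℂ] H := star T with hAdef
  set S : H →L[ℂ] H := T ∘L A with hSdef
  have hS : IsCompactOperator ⇑S := by
    have h := hT.comp_clm A
    rwa [hSdef, coe_comp']
  have htb : TotallyBounded (⇑A '' closedBall (0 : H) 1) := by
    rw [Metric.totallyBounded_iff]
    intro ε hε
    have hKtb : TotallyBounded (⇑S '' closedBall (0 : H) 1) := by
      obtain ⟨K, hK, hKsub⟩ := hS.image_closedBall_subset_compact (𝕜₁ := ℂ) 1
      exact hK.totallyBounded.subset hKsub
    have hδpos : (0 : ℝ) < ε ^ 2 / 8 := by positivity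
    obtain ⟨t, htfin, htsub⟩ := (Metric.totallyBounded_iff).mp hKtb (ε ^ 2 / 8) hδpos
    let u : H → H := fun y =>
      if h : ∃ x ∈ closedBall (0 : H) 1, dist (S x) y < ε ^ 2 / 8 then h.choose else 0
    refine ⟨(fun y => A (u y)) '' t, htfin.image _, ?_⟩
    rintro _ ⟨x, hxB, rfl⟩
    have hx : S x ∈ ⋃ y ∈ t, ball y (ε ^ 2 / 8) := htsub ⟨x, hxB, rfl⟩
    simp only [Set.mem_iUnion, mem_ball, exists_prop] at hx
    obtain ⟨y, hyt, hxy⟩ := hx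
    have hex : ∃ x' ∈ closedBall (0 : H) 1, dist (S x') y < ε ^ 2 / 8 := ⟨x, hxB, hxy⟩
    have huy : u y = hex.choose := dif_pos hex
    obtain ⟨hx'B, hx'y⟩ := hex.choose_spec
    set x' := hex.choose
    refine Set.mem_iUnion₂.mpr ⟨A (u y), Set.mem_image_of_mem _ hyt, ?_⟩
    rw [mem_ball, huy]
    set w := x - x' with hw
    have hSw : ‖S w‖ = dist (S x) (S x') := by
      rw [dist_eq_norm, hw, map_sub]
    have key : dist (A x) (A x') ^ 2 ≤ 2 * dist (S x) (S x') := by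
      rw [dist_eq_norm, ← map_sub, ← hw]
      have h1 : ‖A w‖ ^ 2 = RCLike.re (inner (𝕜 := ℂ) w (S w)) := by
        rw [← inner_self_eq_norm_sq (𝕜 := ℂ)]
        congr 1
        rw [hAdef, star_eq_adjoint, ContinuousLinearMap.adjoint_inner_left]
        rfl
      have h2 : RCLike.re (inner (𝕜 := ℂ) w (S w)) ≤ ‖w‖ * ‖S w‖ :=
        le_trans (RCLike.re_le_norm _) (norm_inner_le_norm (𝕜 := ℂ) w (S w))
      have h3 : ‖w‖ ≤ 2 := by
        rw [hw, ← dist_eq_norm]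
        simp only [mem_closedBall] at hxB hx'B
        calc dist x x' ≤ dist x 0 + dist 0 x' := dist_triangle x 0 x'
        _ ≤ 1 + 1 := by rw [dist_comm (0 : H) x']; exact add_le_add hxB hx'B
        _ = 2 := by norm_num
      have h4 : (0 : ℝ) ≤ ‖S w‖ := norm_nonneg _
      calc ‖A w‖ ^ 2 ≤ ‖w‖ * ‖S w‖ := h1 ▸ h2
      _ ≤ 2 * ‖S w‖ := by nlinarith
      _ = 2 * dist (S x) (S x') := by rw [hSw]
    have hSxx' : dist (S x) (S x') < ε ^ 2 / 4 := by
      calc dist (S x) (S x') ≤ dist (S x) y + dist y (S x') := dist_triangle _ _ _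
      _ < ε ^ 2 / 8 + ε ^ 2 / 8 := by rw [dist_comm y (S x')]; exact add_lt_add hxy hx'y
      _ = ε ^ 2 / 4 := by ring
    have hd0 : (0 : ℝ) ≤ dist (A x) (A x') := dist_nonneg
    nlinarith
  refine ⟨closure (⇑A '' closedBall (0 : H) 1),
    htb.closure.isCompact_of_isClosed isClosed_closure, ?_⟩
  refine Filter.mem_of_superset (closedBall_mem_nhds (0 : H) one_pos) ?_
  intro x hx
  exact subset_closure (Set.mem_image_of_mem _ hx)

/-- The C*-algebra `𝒦(H)` of compact operators on a complex Hilbert space `H`, realized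
as the (closed) non-unital star-subalgebra of the bounded operators `H →L[ℂ] H` consisting
of the compact operators. -/
noncomputable def compactOperators (H : Type*) [NormedAddCommGroup H]
    [InnerProductSpace ℂ H] [CompleteSpace H] :
    NonUnitalStarSubalgebra ℂ (H →L[ℂ] H) where
  carrier := {T : H →L[ℂ] H | IsCompactOperator T}
  add_mem' hf hg := hf.add hg
  zero_mem' := isCompactOperator_zero
  smul_mem' c _ hf := hf.smul c
  mul_mem' := fun {a b} ha _ => (ha.comp_clm b : IsCompactOperator (⇑a ∘ ⇑b))
  star_mem' := fun {a} ha => isCompactOperator_star ha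

instance compactOperators.isClosed (H : Type*) [NormedAddCommGroup H]
    [InnerProductSpace ℂ H] [CompleteSpace H] :
    IsClosed ((compactOperators H : Set (H →L[ℂ] H))) :=
  isClosed_setOf_isCompactOperator

/-!
A tracial state `φ` on `𝒦⁺` is positive, hence continuous. For an orthonormal sequence `(eᵢ)`
the rank-one projections `θᵢ = |eᵢ⟩⟨eᵢ|` are mutually orthogonal, and `θᵢ = |eᵢ⟩⟨e₀| |e₀⟩⟨eᵢ|`,
`θ₀ = |e₀⟩⟨eᵢ| |eᵢ⟩⟨e₀|`, so traciality gives them a common value `c ≥ 0`. Positivity of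
`1 - (θ₀ + ⋯ + θₙ₋₁)` gives `n c ≤ 1` for every `n`, so `c = 0`. Traciality again gives
`φ |x⟩⟨y| = ⟪y, x⟫ c = 0`, and the span of the rank-one operators is dense in `𝒦(H)` (project a
compact operator onto the span of a finite `ε`-net of the image of the unit ball), so `φ`
vanishes on `𝒦(H)` by continuity.
-/

open InnerProductSpace ContinuousLinearMap

open ComplexOrder in
theorem Complex.eq_zero_of_forall_natCast_mul_le_one {c : ℂ} (hc : 0 ≤ c)
    (h : ∀ n : ℕ, n * c ≤ 1) : c = 0 := by
  have hre := Complex.eq_re_of_ofReal_le (r := 0) (by simpa using hc)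
  rw [hre] at h hc ⊢
  have hc' : 0 ≤ c.re := by exact_mod_cast hc
  refine congrArg _ (hc'.antisymm' (le_of_not_gt fun hpos => ?_))
  obtain ⟨n, hn⟩ := exists_nat_gt c.re⁻¹
  have : (n : ℝ) * c.re ≤ 1 := by exact_mod_cast h n
  rw [inv_lt_iff_one_lt_mul₀ hpos] at hn
  linarith

theorem IsStarProjection.sum_range {R : Type*} [NonUnitalNonAssocSemiring R] [StarRing R]
    {p : ℕ → R} (hp : ∀ i, IsStarProjection (p i)) (horth : ∀ i j, i ≠ j → p i * p j = 0)
    (n : ℕ) : IsStarProjection (∑ i ∈ Finset.range n, p i) := by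
  induction n with
  | zero => simp [IsStarProjection.zero]
  | succ n ih =>
    rw [Finset.sum_range_succ]
    refine ih.add (hp n) ?_
    rw [Finset.sum_mul]
    exact Finset.sum_eq_zero fun i hi => horth i n (Finset.mem_range.mp hi).ne

open ComplexOrder in
theorem state_apply_eq_zero_of_orthogonal_projections {A : Type*} [Ring A] [StarRing A]
    [Module ℂ A] (φ : A →ₗ[ℂ] ℂ) (hunital : φ 1 = 1) (hpos : ∀ a, 0 ≤ φ (star a * a))
    {p : ℕ → A} (hp : ∀ i, IsStarProjection (p i)) (horth : ∀ i j, i ≠ j → p i * p j = 0)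
    (hφp : ∀ i, φ (p i) = φ (p 0)) : φ (p 0) = 0 := by
  have hproj {q : A} (hq : IsStarProjection q) : 0 ≤ φ q := by
    simpa [hq.isSelfAdjoint.star_eq, hq.isIdempotentElem.eq] using hpos q
  refine Complex.eq_zero_of_forall_natCast_mul_le_one (hproj (hp 0)) fun n => ?_
  have := hproj (IsStarProjection.sum_range hp horth n).one_sub
  rwa [map_sub, hunital, map_sum, Finset.sum_congr rfl fun i _ => hφp i, Finset.sum_const,
    Finset.card_range, nsmul_eq_mul, sub_nonneg] at this

open ComplexOrder in
theorem LinearMap.continuous_of_nonneg_star_mul_self {A : Type*} [NonUnitalCStarAlgebra A]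
    (φ : A →ₗ[ℂ] ℂ) (hpos : ∀ a, 0 ≤ φ (star a * a)) : Continuous φ := by
  let := CStarAlgebra.spectralOrder A
  have := CStarAlgebra.spectralOrderedRing A
  refine map_continuous (PositiveLinearMap.mk₀ φ fun x hx => ?_)
  rw [StarOrderedRing.nonneg_iff] at hx
  induction hx using AddSubmonoid.closure_induction with
  | mem _ h => obtain ⟨s, rfl⟩ := h; exact hpos s
  | zero => simp
  | add u v _ _ hu hv => simpa using add_nonneg hu hv

section InnerProductSpace

variable {𝕜 E F : Type*} [RCLike 𝕜] [NormedAddCommGroup E] [InnerProductSpace 𝕜 E]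

theorem exists_orthonormal_nat_of_not_finiteDimensional (h : ¬ FiniteDimensional 𝕜 E) :
    ∃ e : ℕ → E, Orthonormal 𝕜 e := by
  let b := Module.Free.chooseBasis 𝕜 E
  have : Infinite (Module.Free.ChooseBasisIndex 𝕜 E) := by
    contrapose! h
    have := Fintype.ofFinite (Module.Free.ChooseBasisIndex 𝕜 E)
    exact Module.Finite.of_basis b
  exact ⟨_, gramSchmidtNormed_orthonormal
    (b.linearIndependent.comp _ (Infinite.natEmbedding _).injective)⟩

theorem isCompactOperator_rankOne (x y : E) : IsCompactOperator (rankOne 𝕜 x y) := by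
  rw [rankOne_def', coe_comp]
  have h𝕜 : IsCompactOperator (id : 𝕜 → 𝕜) :=
    (isCompactOperator_id_iff_finiteDimensional (𝕜 := 𝕜)).mpr inferInstance
  exact (h𝕜.comp_clm (innerSL 𝕜 y)).continuous_comp (toSpanSingleton 𝕜 x).continuous

variable [NormedAddCommGroup F] [NormedSpace 𝕜 F]

theorem IsCompactOperator.exists_norm_sub_starProjection_comp_le {T : F →L[𝕜] E}
    (hT : IsCompactOperator T) {ε : ℝ} (hε : 0 < ε) :
    ∃ (V : Submodule 𝕜 E) (_ : FiniteDimensional 𝕜 V), ‖T - V.starProjection ∘L T‖ ≤ ε := by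
  obtain ⟨K, hK, hTK⟩ := hT.image_closedBall_subset_compact (1 : ℝ)
  obtain ⟨t, ht, hnet⟩ := Metric.totallyBounded_iff.mp (hK.totallyBounded.subset hTK) ε hε
  have : FiniteDimensional 𝕜 (Submodule.span 𝕜 t) := .span_of_finite 𝕜 ht
  refine ⟨Submodule.span 𝕜 t, inferInstance, opNorm_le_of_unit_norm hε.le fun z hz => ?_⟩
  obtain ⟨y, hy, hTzy⟩ := Set.mem_iUnion₂.mp (hnet ⟨z, by simp [hz], rfl⟩)
  calc ‖(T - (Submodule.span 𝕜 t).starProjection ∘L T) z‖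
      = ⨅ v : Submodule.span 𝕜 t, ‖T z - v‖ := Submodule.starProjection_minimal (T z)
    _ ≤ ‖T z - y‖ := ciInf_le ⟨0, Set.forall_mem_range.mpr fun _ => norm_nonneg _⟩
        (⟨y, Submodule.subset_span hy⟩ : Submodule.span 𝕜 t)
    _ ≤ ε := (mem_ball_iff_norm.mp hTzy).le

end InnerProductSpace

namespace compactOperators

variable {H : Type*} [NormedAddCommGroup H] [InnerProductSpace ℂ H] [CompleteSpace H]

noncomputable def rankOne (x y : H) : compactOperators H :=
  ⟨InnerProductSpace.rankOne ℂ x y, isCompactOperator_rankOne x y⟩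

@[simp] lemma coe_rankOne (x y : H) :
    (rankOne x y : H →L[ℂ] H) = InnerProductSpace.rankOne ℂ x y := rfl

lemma rankOne_mul_rankOne (x y z w : H) :
    rankOne x y * rankOne z w = inner ℂ y z • rankOne x w :=
  Subtype.ext (rankOne_comp_rankOne x y z w)

lemma star_rankOne (x y : H) : star (rankOne x y) = rankOne y x :=
  Subtype.ext (by simp [star_eq_adjoint])

lemma isStarProjection_rankOne_self {x : H} (hx : ‖x‖ = 1) :
    IsStarProjection (rankOne x x) where
  isIdempotentElem := by
    rw [IsIdempotentElem, rankOne_mul_rankOne, inner_self_eq_norm_sq_to_K, hx]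
    simp
  isSelfAdjoint := star_rankOne x x

lemma apply_rankOne_of_tracial (τ : compactOperators H →ₗ[ℂ] ℂ)
    (hτ : ∀ a b, τ (a * b) = τ (b * a)) {e : H} (he : ‖e‖ = 1) (x y : H) :
    τ (rankOne x y) = inner ℂ y x * τ (rankOne e e) := by
  have he' : inner ℂ e e = (1 : ℂ) := by simp [inner_self_eq_norm_sq_to_K, he]
  calc τ (rankOne x y) = τ (rankOne x e * rankOne e y) := by
        rw [rankOne_mul_rankOne, he', one_smul]
    _ = τ (rankOne e y * rankOne x e) := hτ _ _
    _ = inner ℂ y x * τ (rankOne e e) := by rw [rankOne_mul_rankOne, map_smul, smul_eq_mul]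

theorem dense_span_rankOne :
    Dense (Submodule.span ℂ (Set.range fun p : H × H => rankOne p.1 p.2) :
      Set (compactOperators H)) := by
  refine Metric.dense_iff.mpr fun k r hr => ?_
  obtain ⟨V, _, hV⟩ := k.2.exists_norm_sub_starProjection_comp_le (half_pos hr)
  let b := stdOrthonormalBasis ℂ V
  let F : compactOperators H := ∑ i, rankOne (b i) (adjoint (k : H →L[ℂ] H) (b i))
  have hF : (F : H →L[ℂ] H) = V.starProjection ∘L k := by
    simp [F, b.starProjection_eq_sum_rankOne, finsetSum_comp, InnerProductSpace.rankOne_comp]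
  refine ⟨F, ?_, Submodule.sum_mem _ fun i _ => Submodule.subset_span ⟨(_, _), rfl⟩⟩
  rw [Metric.mem_ball, dist_comm, dist_eq_norm]
  exact (show ‖(k : H →L[ℂ] H) - F‖ ≤ r / 2 from hF ▸ hV).trans_lt (half_lt_self hr)

end compactOperators

open ComplexOrder in
/-- For an infinite-dimensional complex Hilbert space `H`, every tracial state on
`𝒦⁺ = Unitization ℂ 𝒦(H)` vanishes on the ideal of compact operators. -/
theorem stmt_9 {H : Type*} [NormedAddCommGroup H] [InnerProductSpace ℂ H] [CompleteSpace H]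
    (hdim : ¬ FiniteDimensional ℂ H)
    (φ : Unitization ℂ (compactOperators H) →ₗ[ℂ] ℂ)
    (hunital : φ 1 = 1)
    (hpos : ∀ a : Unitization ℂ (compactOperators H), 0 ≤ φ (star a * a))
    (htracial : ∀ a b : Unitization ℂ (compactOperators H), φ (a * b) = φ (b * a)) :
    ∀ k : compactOperators H, φ (Unitization.inr k) = 0 := by
  let τ : compactOperators H →L[ℂ] ℂ :=
    ⟨φ ∘ₗ Unitization.inrHom ℂ ℂ _,
      (φ.continuous_of_nonneg_star_mul_self hpos).comp Unitization.continuous_inr⟩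
  have hτ (a b) : τ (a * b) = τ (b * a) := by
    simpa [τ, Unitization.inr_mul] using htracial a b
  obtain ⟨e, he⟩ := exists_orthonormal_nat_of_not_finiteDimensional hdim
  have hτ_rankOne := compactOperators.apply_rankOne_of_tracial τ.toLinearMap hτ (he.1 0)
  have hτe : τ (compactOperators.rankOne (e 0) (e 0)) = 0 := by
    refine state_apply_eq_zero_of_orthogonal_projections φ hunital hpos
      (p := fun i => (compactOperators.rankOne (e i) (e i) : Unitization ℂ _))
      (fun i => (compactOperators.isStarProjection_rankOne_self (he.1 i)).inr)
      (fun i j hij => ?_) (fun i => ?_)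
    · rw [← Unitization.inr_mul, compactOperators.rankOne_mul_rankOne, he.2 hij, zero_smul,
        Unitization.inr_zero]
    · simpa [τ, he.1 i, inner_self_eq_norm_sq_to_K] using hτ_rankOne (e i) (e i)
  have hτ0 : τ = 0 := ContinuousLinearMap.ext_on compactOperators.dense_span_rankOne (by
    rintro _ ⟨⟨x, y⟩, rfl⟩
    simpa [hτe] using hτ_rankOne x y)
  exact fun k => congr($hτ0 k)
end

section
/- Let S be the unilateral shift on ℓ²(ℕ, ℂ), i.e., the bounded linear operator determined by (Sx)(0) = 0 and (Sx)(n+1) = x(n) for all x ∈ ℓ²(ℕ, ℂ) and n ∈ ℕ. Then the Toeplitz algebra 𝒯, defined as the smallest norm-closed star-subalgebra of the bounded operators on ℓ²(ℕ, ℂ) containing S and the identity, contains every compact operator on ℓ²(ℕ, ℂ). -/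
/-!
If `S` shifts a Hilbert basis `b` (`S bᵢ = bᵢ₊₁`), then `1 - S S*` is the rank-one projection onto
`b₀`, so `Sⁱ (1 - S S*) S*ʲ` is the matrix unit `x ↦ ⟪bⱼ, x⟫ bᵢ`. A norm-closed subspace containing
all matrix units contains every rank-one operator `x ↦ ⟪y, x⟫ bᵢ`, hence every `Pₙ T`, where `Pₙ`
is the projection onto the span of the first `n` basis vectors. The `Pₙ` are uniformly bounded and
converge pointwise to the identity, so they converge uniformly on compact sets; for compact `T`
this gives `Pₙ T → T` in norm.
-/

open Filter Topology InnerProductSpace ContinuousLinearMap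

section CompactOperator

variable {𝕜 E F ι : Type*} [RCLike 𝕜] [NormedAddCommGroup E] [NormedSpace 𝕜 E]
  [NormedAddCommGroup F] [NormedSpace 𝕜 F]

theorem IsCompactOperator.tendsto_comp_of_tendsto_id {T : E →L[𝕜] F}
    (hT : IsCompactOperator T) {Q : ι → F →L[𝕜] F} {l : Filter ι} {C : ℝ}
    (hQC : ∀ i, ‖Q i‖ ≤ C) (hQ : ∀ y, Tendsto (fun i => Q i y) l (𝓝 y)) :
    Tendsto (fun i => Q i ∘L T) l (𝓝 T) := by
  obtain ⟨K, hK, hTK⟩ := hT.image_closedBall_subset_compact (f := (T : E →ₗ[𝕜] F)) 1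
  have hequi : Equicontinuous fun i => ⇑(Q i) :=
    ((NormedSpace.equicontinuous_TFAE Q).out 1 5).mpr (by exact ⟨C, hQC⟩)
  have hunif : TendstoUniformlyOn (fun i => ⇑(Q i)) id l K := by
    have := (EquicontinuousOn.tendsto_uniformOnFun_iff_pi' (𝔖 := {K}) (by simpa using hK)
      (by simpa using hequi.equicontinuousOn K) l id).mpr (tendsto_pi_nhds.mpr fun y => hQ y)
    exact UniformOnFun.tendsto_iff_tendstoUniformlyOn.mp this K rfl
  refine Metric.tendsto_nhds.mpr fun ε hε => ?_
  filter_upwards [Metric.tendstoUniformlyOn_iff.mp hunif (ε / 2) (half_pos hε)] with i hi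
  rw [dist_eq_norm]
  refine lt_of_le_of_lt (opNorm_le_of_unit_norm (half_pos hε).le fun x hx => ?_)
    (half_lt_self hε)
  have hx' := hi (T x) (hTK ⟨x, by simp [hx], rfl⟩)
  rw [dist_eq_norm'] at hx'
  exact hx'.le

end CompactOperator

namespace HilbertBasis

variable {𝕜 E F ι : Type*} [RCLike 𝕜] [NormedAddCommGroup E] [InnerProductSpace 𝕜 E]
  [NormedAddCommGroup F] [NormedSpace 𝕜 F]

theorem ext_inner (b : HilbertBasis ι 𝕜 E) {x y : E}
    (h : ∀ i, inner 𝕜 (b i) x = inner 𝕜 (b i) y) : x = y :=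
  b.repr.injective (lp.ext (funext fun i => by simp only [b.repr_apply_apply, h]))

theorem ext_continuousLinearMap (b : HilbertBasis ι 𝕜 E) {f g : E →L[𝕜] F}
    (h : ∀ i, f (b i) = g (b i)) : f = g :=
  ext_on (Submodule.dense_iff_topologicalClosure_eq_top.mpr b.dense_span)
    (Set.forall_mem_range.mpr h)

theorem rankOne_mem_of_isClosed (b : HilbertBasis ι 𝕜 E)
    {A : Submodule 𝕜 (E →L[𝕜] F)} (hA : IsClosed (A : Set (E →L[𝕜] F))) {x : F}
    (hb : ∀ i, rankOne 𝕜 x (b i) ∈ A) (y : E) : rankOne 𝕜 x y ∈ A := by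
  let V : Submodule 𝕜 E := A.comap (rankOne 𝕜 x).toLinearMap
  have hV : IsClosed (V : Set E) := hA.preimage (rankOne 𝕜 x).continuous
  have hspan : Submodule.span 𝕜 (Set.range b) ≤ V :=
    Submodule.span_le.mpr (Set.range_subset_iff.mpr hb)
  have hclosure := Submodule.topologicalClosure_minimal _ hspan hV
  rw [b.dense_span] at hclosure
  exact hclosure Submodule.mem_top

section Shift

variable (b : HilbertBasis ℕ 𝕜 E) {S : E →L[𝕜] E} (hS : ∀ i, S (b i) = b (i + 1))
include hS

theorem shift_pow_apply_zero (i : ℕ) : (S ^ i) (b 0) = b i := by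
  induction i with
  | zero => rfl
  | succ i ih => rw [pow_succ', mul_apply_eq_comp, ih, hS]

variable [CompleteSpace E]

theorem adjoint_shift_apply_zero : adjoint S (b 0) = 0 :=
  b.ext_inner fun j => by
    rw [adjoint_inner_right, hS, inner_zero_right, b.orthonormal.inner_eq_zero j.succ_ne_zero]

theorem adjoint_shift_apply_succ (i : ℕ) : adjoint S (b (i + 1)) = b i :=
  b.ext_inner fun j => by
    simp only [adjoint_inner_right, hS, orthonormal_iff_ite.mp b.orthonormal, add_left_inj]

theorem one_sub_shift_mul_adjoint : 1 - S * adjoint S = rankOne 𝕜 (b 0) (b 0) := by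
  refine b.ext_continuousLinearMap fun i => ?_
  rcases i with _ | i
  · simp [b.adjoint_shift_apply_zero hS, b.orthonormal.1 0]
  · simp [b.adjoint_shift_apply_succ hS, hS, b.orthonormal.inner_eq_zero i.succ_ne_zero.symm]

theorem shift_pow_mul_one_sub_mul_adjoint_pow (i j : ℕ) :
    S ^ i * (1 - S * adjoint S) * adjoint S ^ j = rankOne 𝕜 (b i) (b j) := by
  rw [b.one_sub_shift_mul_adjoint hS, mul_def, mul_def, comp_rankOne, rankOne_comp,
    ← star_eq_adjoint (adjoint S ^ j), star_pow, star_eq_adjoint, adjoint_adjoint,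
    b.shift_pow_apply_zero hS, b.shift_pow_apply_zero hS]

theorem isCompactOperator_mem_topologicalClosure_adjoin_shift {T : E →L[𝕜] E}
    (hT : IsCompactOperator T) : T ∈ (StarAlgebra.adjoin 𝕜 {S}).topologicalClosure := by
  set A := (StarAlgebra.adjoin 𝕜 {S}).topologicalClosure
  have hA : IsClosed (A : Set (E →L[𝕜] E)) := StarSubalgebra.isClosed_topologicalClosure _
  have hSA : S ∈ A :=
    StarSubalgebra.le_topologicalClosure _ (StarAlgebra.self_mem_adjoin_singleton 𝕜 S)
  have hunit (i j : ℕ) : rankOne 𝕜 (b i) (b j) ∈ A := by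
    rw [← b.shift_pow_mul_one_sub_mul_adjoint_pow hS]
    exact mul_mem (mul_mem (pow_mem hSA i) (sub_mem (one_mem A) (mul_mem hSA (star_mem hSA))))
      (pow_mem (star_mem hSA) j)
  have hrankOne (i : ℕ) (y : E) : rankOne 𝕜 (b i) y ∈ A :=
    b.rankOne_mem_of_isClosed (A := Subalgebra.toSubmodule A.toSubalgebra) hA (hunit i) y
  let P := b.toSchauderBasis.proj
  have hPT (n : ℕ) : P n ∘L T = ∑ i ∈ Finset.range n, rankOne 𝕜 (b i) (adjoint T (b i)) := by
    ext x
    simp [P, SchauderBasis.proj_apply, adjoint_inner_left]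
  obtain ⟨C, hC⟩ := b.toSchauderBasis.exists_norm_proj_le
  refine hA.mem_of_tendsto (hT.tendsto_comp_of_tendsto_id hC b.toSchauderBasis.tendsto_proj)
    (Eventually.of_forall fun n => ?_)
  rw [hPT]
  exact sum_mem fun i _ => hrankOne i _

end Shift

end HilbertBasis

/-- The Toeplitz algebra — the smallest norm-closed star-subalgebra of the bounded
operators on `ℓ²(ℕ, ℂ)` containing the unilateral shift `S` and the identity — contains
every compact operator on `ℓ²(ℕ, ℂ)`. -/
theorem stmt_16 (S : lp (fun _ : ℕ => ℂ) 2 →L[ℂ] lp (fun _ : ℕ => ℂ) 2)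
    (hS0 : ∀ x : lp (fun _ : ℕ => ℂ) 2, (S x : ∀ _ : ℕ, ℂ) 0 = 0)
    (hS : ∀ (x : lp (fun _ : ℕ => ℂ) 2) (n : ℕ),
      (S x : ∀ _ : ℕ, ℂ) (n + 1) = (x : ∀ _ : ℕ, ℂ) n)
    (T : lp (fun _ : ℕ => ℂ) 2 →L[ℂ] lp (fun _ : ℕ => ℂ) 2)
    (hT : IsCompactOperator T) :
    T ∈ (StarAlgebra.adjoin ℂ ({S} : Set (lp (fun _ : ℕ => ℂ) 2 →L[ℂ]
      lp (fun _ : ℕ => ℂ) 2))).topologicalClosure := by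
  let b : HilbertBasis ℕ ℂ (lp (fun _ : ℕ => ℂ) 2) := default
  have hb (i : ℕ) : b i = lp.single 2 i 1 := (b.repr_symm_single i).symm
  refine b.isCompactOperator_mem_topologicalClosure_adjoin_shift (fun i => ?_) hT
  refine lp.ext (funext fun n => ?_)
  rcases n with _ | n
  · simp [hb, hS0, lp.single_apply]
  · simp [hb, hS, lp.single_apply, Pi.single_apply]
end
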